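/- arXiv:1812.00134 — 5 statements merged into one kernel-verified Lean document; each statement's English description precedes it below -/
import Mathlib

section
/- Let U be a finite set of size n and let 𝒮 be a finite family of subsets of U each of size d. Then there exists a probability distribution p on 𝒮 such that for every T ∈ 𝒮, the expected intersection size ∑_{S∈𝒮} p(S)·|S ∩ T| is at least d²/n. -/
/-!
Let `v` be the point of minimal Euclidean norm in the convex hull of the indicator vectors
`𝟙_S ∈ ℝ^U`, `S ∈ 𝒮`, and write `v = ∑ p(S) 𝟙_S`. Minimality of `v` gives `‖v‖² ≤ ⟪v, 𝟙_T⟫`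
for every `T ∈ 𝒮`, and `⟪v, 𝟙_T⟫ = ∑ p(S) |S ∩ T|`. On the other hand `⟪v, 𝟙_U⟫ = d`, so by
Cauchy–Schwarz `d² ≤ ‖v‖² ‖𝟙_U‖² = ‖v‖² n`.
-/

open Finset

open scoped RealInnerProductSpace

theorem exists_mem_forall_norm_sq_le_inner {F : Type*} [NormedAddCommGroup F]
    [InnerProductSpace ℝ F] {K : Set F} (hne : K.Nonempty) (hc : IsComplete K)
    (hK : Convex ℝ K) : ∃ v ∈ K, ∀ w ∈ K, ‖v‖ ^ 2 ≤ ⟪v, w⟫ := by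
  obtain ⟨v, hv, hmin⟩ := exists_norm_eq_iInf_of_complete_convex hne hc hK 0
  refine ⟨v, hv, fun w hw => ?_⟩
  have h := (norm_eq_iInf_iff_real_inner_le_zero hK hv).1 hmin w hw
  rw [zero_sub, inner_neg_left, inner_sub_right, real_inner_self_eq_norm_sq] at h
  linarith

theorem Finset.exists_sum_smul_eq_of_mem_convexHull_image {ι E : Type*} [DecidableEq ι]
    [AddCommGroup E] [Module ℝ E] {s : Finset ι} {f : ι → E} {x : E}
    (hx : x ∈ convexHull ℝ (f '' s)) :
    ∃ w : ι → ℝ, (∀ i ∈ s, 0 ≤ w i) ∧ ∑ i ∈ s, w i = 1 ∧ ∑ i ∈ s, w i • f i = x := by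
  suffices h : convexHull ℝ (f '' s) ⊆
      {y | ∃ w : ι → ℝ, (∀ i ∈ s, 0 ≤ w i) ∧ ∑ i ∈ s, w i = 1 ∧ ∑ i ∈ s, w i • f i = y} from
    h hx
  refine convexHull_min ?_ ?_
  · rintro _ ⟨i, hi, rfl⟩
    refine ⟨fun j => if j = i then 1 else 0, fun j _ => by positivity, ?_, ?_⟩
    · simp [sum_ite_eq', mem_coe.1 hi]
    · simp [ite_smul, sum_ite_eq', mem_coe.1 hi]
  · rintro _ ⟨w, hw₀, hw₁, rfl⟩ _ ⟨w', hw₀', hw₁', rfl⟩ a b ha hb hab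
    refine ⟨a • w + b • w', fun i hi => ?_, ?_, ?_⟩
    · exact add_nonneg (mul_nonneg ha (hw₀ i hi)) (mul_nonneg hb (hw₀' i hi))
    · simp only [Pi.add_apply, Pi.smul_apply, smul_eq_mul, sum_add_distrib, ← mul_sum, hw₁,
        hw₁', hab, mul_one]
    · simp only [Pi.add_apply, Pi.smul_apply, smul_eq_mul, add_smul, mul_smul, sum_add_distrib,
        smul_sum]

section IndicatorVector

variable {α : Type*} [DecidableEq α] (U : Finset α)

def indicatorVector (T : Finset α) : EuclideanSpace ℝ U :=
  WithLp.toLp 2 fun x => if (x : α) ∈ T then 1 else 0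

variable {U}

theorem inner_indicatorVector {T T' : Finset α} (hT : T ⊆ U) :
    ⟪indicatorVector U T, indicatorVector U T'⟫ = #(T ∩ T') := by
  have hTT' : U ∩ (T ∩ T') = T ∩ T' := inter_eq_right.2 (inter_subset_left.trans hT)
  simp only [indicatorVector, PiLp.inner_apply, RCLike.inner_apply, conj_trivial]
  rw [sum_coe_sort U fun x => (if x ∈ T' then (1 : ℝ) else 0) * if x ∈ T then 1 else 0]
  simp only [ite_zero_mul_ite_zero, one_mul, and_comm (a := _ ∈ T'), ← mem_inter]
  rw [sum_boole, filter_mem_eq_inter, hTT']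

theorem norm_indicatorVector_self_sq : ‖indicatorVector U U‖ ^ 2 = #U := by
  rw [← real_inner_self_eq_norm_sq, inner_indicatorVector subset_rfl, inter_self]

theorem inner_sum_smul_indicatorVector {𝒮 : Finset (Finset α)} (hsub : ∀ S ∈ 𝒮, S ⊆ U)
    (p : Finset α → ℝ) (T : Finset α) :
    ⟪∑ S ∈ 𝒮, p S • indicatorVector U S, indicatorVector U T⟫ = ∑ S ∈ 𝒮, p S * #(S ∩ T) := by
  rw [sum_inner]
  exact sum_congr rfl fun S hS => by rw [real_inner_smul_left, inner_indicatorVector (hsub S hS)]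

end IndicatorVector

theorem stmt_8_general {α : Type*} [DecidableEq α] (U : Finset α) (n d : ℕ)
    (hU : U.card = n)
    (𝒮 : Finset (Finset α)) (h𝒮 : 𝒮.Nonempty)
    (hsub : ∀ S ∈ 𝒮, S ⊆ U) (hcard : ∀ S ∈ 𝒮, S.card = d) :
    ∃ p : Finset α → ℝ,
      (∀ S ∈ 𝒮, 0 ≤ p S) ∧ (∑ S ∈ 𝒮, p S = 1) ∧
      ∀ T ∈ 𝒮, (d : ℝ) ^ 2 / n ≤ ∑ S ∈ 𝒮, p S * ((S ∩ T).card : ℝ) := by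
  obtain ⟨v, hvK, hv⟩ := exists_mem_forall_norm_sq_le_inner
    ((coe_nonempty.2 h𝒮).image (indicatorVector U)).convexHull
    ((𝒮.finite_toSet.image _).isCompact_convexHull ℝ).isComplete (convex_convexHull ℝ _)
  obtain ⟨p, hp₀, hp₁, hpv⟩ := exists_sum_smul_eq_of_mem_convexHull_image hvK
  refine ⟨p, hp₀, hp₁, fun T hT => ?_⟩
  have h_total : ⟪v, indicatorVector U U⟫ = d := by
    rw [← hpv, inner_sum_smul_indicatorVector hsub]
    calc ∑ S ∈ 𝒮, p S * #(S ∩ U) = ∑ S ∈ 𝒮, p S * d :=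
          sum_congr rfl fun S hS => by rw [inter_eq_left.2 (hsub S hS), hcard S hS]
      _ = d := by rw [← sum_mul, hp₁, one_mul]
  have h_CS : (d : ℝ) ^ 2 ≤ ‖v‖ ^ 2 * n := by
    have := real_inner_mul_inner_self_le v (indicatorVector U U)
    rwa [h_total, real_inner_self_eq_norm_sq, real_inner_self_eq_norm_sq,
      norm_indicatorVector_self_sq, hU, ← sq] at this
  calc (d : ℝ) ^ 2 / n ≤ ‖v‖ ^ 2 :=
        div_le_of_le_mul₀ (Nat.cast_nonneg n) (by positivity) h_CS
    _ ≤ ⟪v, indicatorVector U T⟫ := hv _ (subset_convexHull ℝ _ ⟨T, hT, rfl⟩)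
    _ = ∑ S ∈ 𝒮, p S * #(S ∩ T) := hpv ▸ inner_sum_smul_indicatorVector hsub p T

theorem stmt_8 {α : Type*} [DecidableEq α] (U : Finset α) (n d : ℕ)
    (hU : U.card = n) (hn : 1 ≤ n)
    (𝒮 : Finset (Finset α)) (h𝒮 : 𝒮.Nonempty)
    (hsub : ∀ S ∈ 𝒮, S ⊆ U) (hcard : ∀ S ∈ 𝒮, S.card = d) :
    ∃ p : Finset α → ℝ,
      (∀ S ∈ 𝒮, 0 ≤ p S) ∧ (∑ S ∈ 𝒮, p S = 1) ∧
      ∀ T ∈ 𝒮, (d : ℝ) ^ 2 / n ≤ ∑ S ∈ 𝒮, p S * ((S ∩ T).card : ℝ) :=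
  stmt_8_general U n d hU 𝒮 h𝒮 hsub hcard
end

section
/- Let U be a finite set of size n and 𝒮 a finite family of d-element subsets of U. Suppose q : 𝒮 → ℝ≥0 satisfies, for every S ∈ 𝒮, ∑_{u ∈ S} ∑_{T ∈ 𝒮, T ∋ u} q(T) ≤ d²/n. Then ∑_{T ∈ 𝒮} q(T) ≤ 1. -/
/-! With `w u = ∑_{T ∋ u} q T` and `Q = ∑_T q T`, double counting gives `∑_{u ∈ U} w u = d Q` and
`∑_{u ∈ U} (w u)² = ∑_S q S ∑_{u ∈ S} w u ≤ Q d² / n`. Cauchy–Schwarz over the `n` points of `U`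
then yields `d² Q² ≤ n ∑ (w u)² ≤ d² Q`, hence `Q ≤ 1`. -/

open Finset

namespace Finset

variable {α R : Type*} [DecidableEq α]

def coverWeight [AddCommMonoid R] (𝒮 : Finset (Finset α)) (q : Finset α → R) (u : α) : R :=
  ∑ T ∈ 𝒮 with u ∈ T, q T

section CommSemiring

variable [CommSemiring R] {U : Finset α} {𝒮 : Finset (Finset α)}

theorem sum_mul_coverWeight (hsub : ∀ T ∈ 𝒮, T ⊆ U) (q : Finset α → R) (f : α → R) :
    ∑ u ∈ U, f u * coverWeight 𝒮 q u = ∑ T ∈ 𝒮, q T * ∑ u ∈ T, f u := by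
  simp only [coverWeight, mul_sum]
  refine (sum_comm' fun u T => ?_).trans <|
    sum_congr rfl fun _ _ => sum_congr rfl fun _ _ => mul_comm _ _
  simp only [mem_filter]
  exact ⟨fun ⟨_, hT, huT⟩ => ⟨huT, hT⟩, fun ⟨huT, hT⟩ => ⟨hsub T hT huT, hT, huT⟩⟩

theorem sum_coverWeight_of_card_eq (hsub : ∀ T ∈ 𝒮, T ⊆ U) {d : ℕ}
    (hcard : ∀ T ∈ 𝒮, T.card = d) (q : Finset α → R) :
    ∑ u ∈ U, coverWeight 𝒮 q u = d * ∑ T ∈ 𝒮, q T := by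
  have h := sum_mul_coverWeight hsub q (fun _ => 1)
  simp only [one_mul] at h
  rw [h, mul_sum]
  exact sum_congr rfl fun T hT => by simp [hcard T hT, mul_comm]

end CommSemiring

theorem sum_coverWeight_sq_le [CommSemiring R] [PartialOrder R] [IsOrderedRing R]
    {U : Finset α} {𝒮 : Finset (Finset α)} (hsub : ∀ T ∈ 𝒮, T ⊆ U)
    {q : Finset α → R} (hq : ∀ T ∈ 𝒮, 0 ≤ q T) {B : R}
    (hB : ∀ S ∈ 𝒮, ∑ u ∈ S, coverWeight 𝒮 q u ≤ B) :
    ∑ u ∈ U, coverWeight 𝒮 q u ^ 2 ≤ B * ∑ T ∈ 𝒮, q T := by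
  simp only [sq]
  rw [sum_mul_coverWeight hsub q, mul_sum]
  exact sum_le_sum fun S hS =>
    (mul_le_mul_of_nonneg_left (hB S hS) (hq S hS)).trans_eq (mul_comm _ _)

end Finset

theorem stmt_9_general {α : Type*} [DecidableEq α] (U : Finset α) (n d : ℕ)
    (hU : U.card = n) (hd : 1 ≤ d)
    (𝒮 : Finset (Finset α))
    (hsub : ∀ S ∈ 𝒮, S ⊆ U) (hcard : ∀ S ∈ 𝒮, S.card = d)
    (q : Finset α → ℝ) (hq : ∀ T ∈ 𝒮, 0 ≤ q T)
    (hfeas : ∀ S ∈ 𝒮, ∑ u ∈ S, ∑ T ∈ 𝒮.filter (fun T => u ∈ T), q T ≤ (d : ℝ) ^ 2 / n) :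
    ∑ T ∈ 𝒮, q T ≤ 1 := by
  set Q := ∑ T ∈ 𝒮, q T
  have hQ : 0 ≤ Q := sum_nonneg hq
  have hn_mul : (n : ℝ) * ((d : ℝ) ^ 2 / n * Q) ≤ (d : ℝ) ^ 2 * Q := by
    rcases eq_or_ne (n : ℝ) 0 with h | h
    · simp only [h, zero_mul]; positivity
    · rw [← mul_assoc, mul_div_cancel₀ _ h]
  have key : ((d : ℝ) * Q) ^ 2 ≤ (d : ℝ) ^ 2 * Q := calc
    ((d : ℝ) * Q) ^ 2 = (∑ u ∈ U, coverWeight 𝒮 q u) ^ 2 := by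
      rw [sum_coverWeight_of_card_eq hsub hcard]
    _ ≤ n * ∑ u ∈ U, coverWeight 𝒮 q u ^ 2 := hU ▸ sq_sum_le_card_mul_sum_sq
    _ ≤ n * ((d : ℝ) ^ 2 / n * Q) := by gcongr; exact sum_coverWeight_sq_le hsub hq hfeas
    _ ≤ (d : ℝ) ^ 2 * Q := hn_mul
  have hd_sq : (0 : ℝ) < (d : ℝ) ^ 2 := by positivity
  have hQ_sq : Q ^ 2 ≤ Q := le_of_mul_le_mul_left (by linarith [key]) hd_sq
  nlinarith

theorem stmt_9 {α : Type*} [DecidableEq α] (U : Finset α) (n d : ℕ)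
    (hU : U.card = n) (hn : 1 ≤ n) (hd : 1 ≤ d)
    (𝒮 : Finset (Finset α))
    (hsub : ∀ S ∈ 𝒮, S ⊆ U) (hcard : ∀ S ∈ 𝒮, S.card = d)
    (q : Finset α → ℝ) (hq : ∀ T ∈ 𝒮, 0 ≤ q T)
    (hfeas : ∀ S ∈ 𝒮, ∑ u ∈ S, ∑ T ∈ 𝒮.filter (fun T => u ∈ T), q T ≤ (d : ℝ) ^ 2 / n) :
    ∑ T ∈ 𝒮, q T ≤ 1 :=
  stmt_9_general U n d hU hd 𝒮 hsub hcard q hq hfeas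
end

section
/- In a bipartite graph H = (U ∪ V_P, E) where every maximum matching matches all of V_P, together with a skeleton decomposition into pairs (S_i, T_i), i = 0,...,m, satisfying Γ(⋃_{i<j} S_i) = ⋃_{i<j} T_i for all j: if M* is a perfect matching of a supergraph G obtained by adding new online vertices V_A (with arbitrary edges to U), then for every t, |M*(V_A) ∩ ⋃_{i≤t} T_i| ≤ ∑_{i≤t} (|T_i| − |S_i|). -/
/-!
The matching `M*` sends every vertex of `⋃_{i ≤ t} S_i` to an `H`-neighbour, hence into
`Γ(⋃_{i ≤ t} S_i) = ⋃_{i ≤ t} T_i`, and being injective it sends `V_A` elsewhere. So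
`⋃_{i ≤ t} T_i` contains `|⋃_{i ≤ t} S_i|` partners of `V_P` besides the partners of `V_A`
that it meets.
-/

open Finset

theorem Finset.disjoint_image_of_injOn {α β : Type*} [DecidableEq α] [DecidableEq β]
    {f : α → β} {s t : Finset α} (hst : Disjoint s t) (hf : Set.InjOn f ↑(s ∪ t)) :
    Disjoint (s.image f) (t.image f) := by
  rw [disjoint_iff_inter_eq_empty, ← image_inter_of_injOn s t (by simpa using hf),
    disjoint_iff_inter_eq_empty.mp hst, image_empty]

theorem Finset.card_image_inter_add_card_le {α β : Type*} [DecidableEq α] [DecidableEq β]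
    {f : α → β} {s t : Finset α} {N : Finset β} (hst : Disjoint s t)
    (hf : Set.InjOn f ↑(s ∪ t)) (hs : ∀ a ∈ s, f a ∈ N) :
    #(t.image f ∩ N) + #s ≤ #N := by
  have hfs : Set.InjOn f ↑s := hf.mono (by simp)
  calc #(t.image f ∩ N) + #s = #(t.image f ∩ N ∪ s.image f) := by
        rw [card_union_of_disjoint, card_image_of_injOn hfs]
        exact (disjoint_image_of_injOn hst hf).symm.mono_left inter_subset_left
    _ ≤ #N := card_le_card <| union_subset inter_subset_right <| by
        simpa [image_subset_iff] using hs

theorem stmt_12_general {V : Type*} [DecidableEq V] [Fintype V]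
    (U VP VA : Finset V)
    (hPA : Disjoint VP VA)
    (EH : V → V → Prop) [DecidableRel EH]
    (hEH : ∀ a b, EH a b → a ∈ VP ∧ b ∈ U)
    (m : ℕ) (S T : Fin (m + 1) → Finset V)
    (hSdisj : ∀ i j, i ≠ j → Disjoint (S i) (S j))
    (hTdisj : ∀ i j, i ≠ j → Disjoint (T i) (T j))
    (hSpart : (Finset.univ : Finset (Fin (m + 1))).biUnion S = VP)
    -- skeleton neighborhood property: Γ(⋃_{i ≤ t} S i) = ⋃_{i ≤ t} T i
    (hΓ : ∀ t : Fin (m + 1),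
      U.filter (fun b => ∃ a, (∃ i ≤ t, a ∈ S i) ∧ EH a b) = (Finset.Iic t).biUnion T)
    -- M* is a perfect matching of G = H plus adversarial vertices VA
    (M : V → V)
    (hMinj : Set.InjOn M ↑(VP ∪ VA))
    (hMH : ∀ a ∈ VP, EH a (M a)) :
    ∀ t : Fin (m + 1),
      (((VA.image M) ∩ (Finset.Iic t).biUnion T).card : ℤ) ≤
        ∑ i ∈ Finset.Iic t, (((T i).card : ℤ) - ((S i).card : ℤ)) := by
  intro t
  have hSP : (Iic t).biUnion S ⊆ VP :=
    hSpart ▸ biUnion_subset_biUnion_of_subset_left S (subset_univ _)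
  have hmatched : ∀ a ∈ (Iic t).biUnion S, M a ∈ (Iic t).biUnion T := by
    intro a ha
    obtain ⟨i, hi, hai⟩ := mem_biUnion.mp ha
    have hadj := hMH a (hSP ha)
    rw [← hΓ t]
    exact mem_filter.mpr ⟨(hEH _ _ hadj).2, a, ⟨i, mem_Iic.mp hi, hai⟩, hadj⟩
  have hcount := card_image_inter_add_card_le (hPA.mono_left hSP)
    (hMinj.mono (coe_subset.mpr (union_subset_union hSP Subset.rfl))) hmatched
  rw [card_biUnion (fun i _ j _ hij => hSdisj i j hij),
    card_biUnion (fun i _ j _ hij => hTdisj i j hij)] at hcount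
  rw [sum_sub_distrib]
  linarith

theorem stmt_12 {V : Type*} [DecidableEq V] [Fintype V]
    (U VP VA : Finset V)
    (hUP : Disjoint U VP) (hUA : Disjoint U VA) (hPA : Disjoint VP VA)
    (EH : V → V → Prop) [DecidableRel EH]
    (hEH : ∀ a b, EH a b → a ∈ VP ∧ b ∈ U)
    (m : ℕ) (S T : Fin (m + 1) → Finset V)
    (hScard : ∀ i, (S i).card ≤ (T i).card)
    (hSdisj : ∀ i j, i ≠ j → Disjoint (S i) (S j))
    (hTdisj : ∀ i j, i ≠ j → Disjoint (T i) (T j))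
    (hSpart : (Finset.univ : Finset (Fin (m + 1))).biUnion S = VP)
    (hTpart : (Finset.univ : Finset (Fin (m + 1))).biUnion T = U)
    -- skeleton neighborhood property: Γ(⋃_{i ≤ t} S i) = ⋃_{i ≤ t} T i
    (hΓ : ∀ t : Fin (m + 1),
      U.filter (fun b => ∃ a, (∃ i ≤ t, a ∈ S i) ∧ EH a b) = (Finset.Iic t).biUnion T)
    -- M* is a perfect matching of G = H plus adversarial vertices VA
    (M : V → V)
    (hMinj : Set.InjOn M ↑(VP ∪ VA))
    (hMto : ∀ a ∈ VP ∪ VA, M a ∈ U)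
    (hMsurj : (VP ∪ VA).image M = U)
    (hMH : ∀ a ∈ VP, EH a (M a)) :
    ∀ t : Fin (m + 1),
      (((VA.image M) ∩ (Finset.Iic t).biUnion T).card : ℤ) ≤
        ∑ i ∈ Finset.Iic t, (((T i).card : ℤ) - ((S i).card : ℤ)) :=
  stmt_12_general U VP VA hPA EH hEH m S T hSdisj hTdisj hSpart hΓ M hMinj hMH
end

section
/- Let δ ∈ [0,1] and define the semi-online ski rental strategy: buy immediately with probability q(x) = x·e^x/(e − (1−x)·e^x), and otherwise buy at (fractional) time z ∈ [x,1] with density p_x(z) = (1 − q(x))·e^z/(e − e^x), where x ∈ [0,1) is the guaranteed number of skiing days. Then for every u with x ≤ u ≤ 1, the expected cost q(x) + ∫_x^u (1+z)p_x(z)dz + ∫_u^1 u·p_x(z)dz equals u·e/(e − (1−x)e^x). -/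
/-! The atom `q` and the density `p` share the denominator `D = e - (1 - x) e^x`: `1 - q = (e - e^x) / D`,
so `p z = e^z / D`. Since `(1 + z) e^z` is the derivative of `z e^z`, the expected cost telescopes to
`(x e^x + (u e^u - x e^x) + u (e - e^u)) / D = u e / D`. -/

open MeasureTheory Real

lemma one_sub_mul_exp_le_one (x : ℝ) : (1 - x) * exp x ≤ 1 := by
  calc (1 - x) * exp x ≤ exp (-x) * exp x := by
        gcongr; linarith [add_one_le_exp (-x)]
    _ = 1 := by rw [← exp_add, neg_add_cancel, exp_zero]

lemma exp_one_sub_one_sub_mul_exp_pos (x : ℝ) : 0 < exp 1 - (1 - x) * exp x := by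
  linarith [one_sub_mul_exp_le_one x, add_one_lt_exp one_ne_zero]

lemma integral_one_add_mul_exp (a b : ℝ) :
    ∫ z in a..b, (1 + z) * exp z = b * exp b - a * exp a := by
  refine intervalIntegral.integral_eq_sub_of_hasDerivAt (f := fun t => t * exp t) (fun z _ => ?_)
    ((by fun_prop : Continuous fun z : ℝ => (1 + z) * exp z).intervalIntegrable a b)
  exact ((hasDerivAt_id z).mul (hasDerivAt_exp z)).congr_deriv (by simp only [id]; ring)

theorem stmt_13_general (x u : ℝ) (hx1 : x < 1)
    (q : ℝ) (hq : q = x * Real.exp x / (Real.exp 1 - (1 - x) * Real.exp x))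
    (p : ℝ → ℝ) (hp : ∀ z, p z = (1 - q) * Real.exp z / (Real.exp 1 - Real.exp x)) :
    (q + ∫ z in x..(1 : ℝ), p z) = 1 ∧
    q + (∫ z in x..u, (1 + z) * p z) + (∫ z in u..(1 : ℝ), u * p z)
      = u * Real.exp 1 / (Real.exp 1 - (1 - x) * Real.exp x) := by
  set D := exp 1 - (1 - x) * exp x
  have hD : D ≠ 0 := (exp_one_sub_one_sub_mul_exp_pos x).ne'
  have hE : exp 1 - exp x ≠ 0 := sub_ne_zero.2 (exp_lt_exp.2 hx1).ne'
  have hp' : p = fun z => exp z * D⁻¹ := by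
    ext z
    rw [hp, hq]
    field_simp
    ring
  have hpos : ∫ z in x..u, (1 + z) * p z = (u * exp u - x * exp x) * D⁻¹ := by
    simp only [hp', ← mul_assoc, intervalIntegral.integral_mul_const, integral_one_add_mul_exp]
  have hmass (a b : ℝ) : ∫ z in a..b, p z = (exp b - exp a) * D⁻¹ := by
    simp only [hp', intervalIntegral.integral_mul_const, integral_exp]
  rw [hpos, intervalIntegral.integral_const_mul, hmass, hmass, hq]
  constructor <;> field_simp <;> ring

theorem stmt_13 (x u : ℝ) (hx0 : 0 ≤ x) (hx1 : x < 1) (hxu : x ≤ u) (hu1 : u ≤ 1)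
    (q : ℝ) (hq : q = x * Real.exp x / (Real.exp 1 - (1 - x) * Real.exp x))
    (p : ℝ → ℝ) (hp : ∀ z, p z = (1 - q) * Real.exp z / (Real.exp 1 - Real.exp x)) :
    (q + ∫ z in x..(1 : ℝ), p z) = 1 ∧
    q + (∫ z in x..u, (1 + z) * p z) + (∫ z in u..(1 : ℝ), u * p z)
      = u * Real.exp 1 / (Real.exp 1 - (1 - x) * Real.exp x) :=
  stmt_13_general x u hx1 q hq p hp
end

section
/- Let G be a bipartite graph with parts U and V, and let H be the subgraph induced by U and a subset V_P ⊆ V. If M* is a maximum matching of G chosen to maximize the number of its edges lying in H, then the restriction of M* to H is a maximum matching of H. -/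
/-- `M` is a matching in the bipartite graph with adjacency `Adj`: every pair in `M`
is an edge, and distinct edges of `M` share no endpoints. -/
def IsMatchingIn {V : Type*} (Adj : V → V → Prop) (M : Finset (V × V)) : Prop :=
  (∀ e ∈ M, Adj e.1 e.2) ∧
  (∀ e ∈ M, ∀ f ∈ M, e ≠ f → e.1 ≠ f.1 ∧ e.2 ≠ f.2)

/-!
Suppose a matching `N` of `H` is larger than `M*_H`. Among the maximum matchings `M'` of `G`
with as many `H`-edges as `M*`, take one with `M'_H \ N` smallest. Counting right endpoints,
some `f ∈ N` has its right endpoint free in `M'`. If its left endpoint is free too, `M' + f` is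
larger than `M'`; otherwise it is covered by some `e ∈ M'`, and `M' - e + f` is again maximum.
If `e ∉ H`, this has more `H`-edges than `M*`; if `e ∈ H`, then `e ∉ N` and it has fewer
`H`-edges outside `N` than `M'`.
-/

section

open Finset

def IsMaximumMatching {α : Type*} (Adj : α → α → Prop) (M : Finset (α × α)) : Prop :=
  IsMatchingIn Adj M ∧ ∀ K : Finset (α × α), IsMatchingIn Adj K → #K ≤ #M

namespace IsMatchingIn

variable {α : Type*} {Adj : α → α → Prop} {M : Finset (α × α)}

theorem injOn_fst (h : IsMatchingIn Adj M) : Set.InjOn Prod.fst (M : Set (α × α)) :=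
  fun e he f hf hef => by_contra fun hne => (h.2 e he f hf hne).1 hef

theorem injOn_snd (h : IsMatchingIn Adj M) : Set.InjOn Prod.snd (M : Set (α × α)) :=
  fun e he f hf hef => by_contra fun hne => (h.2 e he f hf hne).2 hef

theorem mono {K : Finset (α × α)} (h : IsMatchingIn Adj M) (hK : K ⊆ M) : IsMatchingIn Adj K :=
  ⟨fun e he => h.1 e (hK he), fun e he f hf => h.2 e (hK he) f (hK hf)⟩

theorem filter_snd (P : α → Prop) [DecidablePred P] (h : IsMatchingIn Adj M) :
    IsMatchingIn (fun a b => Adj a b ∧ P b) {e ∈ M | P e.2} :=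
  ⟨fun e he => ⟨h.1 e (mem_filter.1 he).1, (mem_filter.1 he).2⟩,
    fun e he f hf => h.2 e (mem_filter.1 he).1 f (mem_filter.1 hf).1⟩

variable [DecidableEq α] {f : α × α}

theorem insert (h : IsMatchingIn Adj M) (hf : Adj f.1 f.2) (hfst : ∀ e ∈ M, e.1 ≠ f.1)
    (hsnd : ∀ e ∈ M, e.2 ≠ f.2) : IsMatchingIn Adj (insert f M) := by
  refine ⟨fun g hg => ?_, fun g hg k hk hne => ?_⟩
  · rcases mem_insert.1 hg with rfl | hgM
    exacts [hf, h.1 g hgM]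
  · rcases mem_insert.1 hg with rfl | hgM <;> rcases mem_insert.1 hk with rfl | hkM
    · exact absurd rfl hne
    · exact ⟨(hfst k hkM).symm, (hsnd k hkM).symm⟩
    · exact ⟨hfst g hgM, hsnd g hgM⟩
    · exact h.2 g hgM k hkM hne

theorem exchange {e : α × α} (h : IsMatchingIn Adj M) (he : e ∈ M) (hf : Adj f.1 f.2)
    (hfst : e.1 = f.1) (hsnd : ∀ g ∈ M, g.2 ≠ f.2) :
    IsMatchingIn Adj (Insert.insert f (M.erase e)) :=
  (h.mono (erase_subset e M)).insert hf
    (fun _ hg hgf => ne_of_mem_erase hg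
      (h.injOn_fst (mem_of_mem_erase hg) he (hgf.trans hfst.symm)))
    (fun g hg => hsnd g (mem_of_mem_erase hg))

end IsMatchingIn

variable {α : Type*} {Adj : α → α → Prop} (P : α → Prop) [DecidablePred P]
  {M N : Finset (α × α)}

theorem exists_mem_forall_snd_ne_of_card_filter_lt [DecidableEq α]
    (hN : IsMatchingIn (fun a b => Adj a b ∧ P b) N) (hlt : #{e ∈ M | P e.2} < #N) :
    ∃ f ∈ N, ∀ e ∈ M, e.2 ≠ f.2 := by
  by_contra! hcovered
  have hmaps : Set.MapsTo Prod.snd (N : Set (α × α)) ({e ∈ M | P e.2}.image Prod.snd : Set α) := by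
    intro f hf
    obtain ⟨e, he, hef⟩ := hcovered f hf
    exact mem_image.2 ⟨e, mem_filter.2 ⟨he, hef ▸ (hN.1 f hf).2⟩, hef⟩
  have := (card_le_card_of_injOn Prod.snd hmaps hN.injOn_snd).trans card_image_le
  omega

namespace IsMaximumMatching

theorem of_card_eq {K : Finset (α × α)} (hM : IsMaximumMatching Adj M)
    (hK : IsMatchingIn Adj K) (hcard : #K = #M) : IsMaximumMatching Adj K :=
  ⟨hK, fun L hL => hcard ▸ hM.2 L hL⟩

variable [DecidableEq α]

theorem exists_card_filter_sdiff_lt (hM : IsMaximumMatching Adj M)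
    (hbest : ∀ K, IsMaximumMatching Adj K → #{e ∈ K | P e.2} ≤ #{e ∈ M | P e.2})
    (hN : IsMatchingIn (fun a b => Adj a b ∧ P b) N) (hlt : #{e ∈ M | P e.2} < #N) :
    ∃ M', IsMaximumMatching Adj M' ∧ #{e ∈ M' | P e.2} = #{e ∈ M | P e.2} ∧
      #({e ∈ M' | P e.2} \ N) < #({e ∈ M | P e.2} \ N) := by
  obtain ⟨f, hfN, hfree⟩ := exists_mem_forall_snd_ne_of_card_filter_lt P hN hlt
  obtain ⟨hfAdj, hfP⟩ := hN.1 f hfN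
  have hfM : f ∉ M := fun h => hfree f h rfl
  by_cases hcovered : ∃ e ∈ M, e.1 = f.1
  swap
  · push Not at hcovered
    have := hM.2 _ (hM.1.insert hfAdj hcovered hfree)
    rw [card_insert_of_notMem hfM] at this
    omega
  obtain ⟨e, he, hef⟩ := hcovered
  have hM' : IsMaximumMatching Adj (insert f (M.erase e)) := by
    refine hM.of_card_eq (hM.1.exchange he hfAdj hef hfree) ?_
    rw [card_insert_of_notMem fun h => hfM (mem_of_mem_erase h), card_erase_add_one he]
  have hfilter : {g ∈ insert f (M.erase e) | P g.2} = insert f ({g ∈ M | P g.2}.erase e) := by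
    rw [filter_insert, if_pos hfP, filter_erase]
  have hfMP : f ∉ {g ∈ M | P g.2}.erase e := fun h => hfM (mem_filter.1 (mem_of_mem_erase h)).1
  by_cases heP : P e.2
  · have heMP : e ∈ {g ∈ M | P g.2} := mem_filter.2 ⟨he, heP⟩
    have heN : e ∉ N := fun heN => hfM (hN.injOn_fst heN hfN hef ▸ he)
    refine ⟨_, hM', ?_, ?_⟩
    · rw [hfilter, card_insert_of_notMem hfMP, card_erase_add_one heMP]
    · rw [hfilter, insert_sdiff_of_mem _ hfN, erase_sdiff_comm]
      exact card_erase_lt_of_mem (mem_sdiff.2 ⟨heMP, heN⟩)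
  · have heMP : e ∉ {g ∈ M | P g.2} := fun h => heP (mem_filter.1 h).2
    have := hbest _ hM'
    rw [hfilter, erase_eq_of_notMem heMP, card_insert_of_notMem fun h => hfM (mem_filter.1 h).1]
      at this
    omega

theorem card_le_card_filter (hM : IsMaximumMatching Adj M)
    (hbest : ∀ K, IsMaximumMatching Adj K → #{e ∈ K | P e.2} ≤ #{e ∈ M | P e.2})
    (hN : IsMatchingIn (fun a b => Adj a b ∧ P b) N) : #N ≤ #{e ∈ M | P e.2} := by
  induction h : #({e ∈ M | P e.2} \ N) using Nat.strong_induction_on generalizing M with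
  | _ n ih =>
    by_contra! hlt
    obtain ⟨M', hM', hcard, hsdiff⟩ := hM.exists_card_filter_sdiff_lt P hbest hN hlt
    exact (ih _ (h ▸ hsdiff) hM' (fun K hK => hcard ▸ hbest K hK) rfl).not_gt (hcard ▸ hlt)

end IsMaximumMatching

end

theorem stmt_16_general {Vt : Type*} [DecidableEq Vt]
    (VP : Finset Vt)
    (Adj : Vt → Vt → Prop)
    (M : Finset (Vt × Vt))
    (hM : IsMatchingIn Adj M)
    (hmax : ∀ M' : Finset (Vt × Vt), IsMatchingIn Adj M' → M'.card ≤ M.card)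
    (hbest : ∀ M' : Finset (Vt × Vt), IsMatchingIn Adj M' →
      (∀ M'' : Finset (Vt × Vt), IsMatchingIn Adj M'' → M''.card ≤ M'.card) →
      (M'.filter (fun e => e.2 ∈ VP)).card ≤ (M.filter (fun e => e.2 ∈ VP)).card) :
    IsMatchingIn (fun a b => Adj a b ∧ b ∈ VP) (M.filter (fun e => e.2 ∈ VP)) ∧
    ∀ N : Finset (Vt × Vt), IsMatchingIn (fun a b => Adj a b ∧ b ∈ VP) N →
      N.card ≤ (M.filter (fun e => e.2 ∈ VP)).card :=
  ⟨hM.filter_snd (· ∈ VP), fun _ hN =>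
    IsMaximumMatching.card_le_card_filter (· ∈ VP) ⟨hM, hmax⟩ (fun K hK => hbest K hK.1 hK.2) hN⟩

theorem stmt_16 {Vt : Type*} [DecidableEq Vt] [Fintype Vt]
    (U V : Finset Vt) (VP : Finset Vt) (hVP : VP ⊆ V)
    (Adj : Vt → Vt → Prop) (hbip : ∀ a b, Adj a b → a ∈ U ∧ b ∈ V)
    (M : Finset (Vt × Vt))
    (hM : IsMatchingIn Adj M)
    (hmax : ∀ M' : Finset (Vt × Vt), IsMatchingIn Adj M' → M'.card ≤ M.card)
    (hbest : ∀ M' : Finset (Vt × Vt), IsMatchingIn Adj M' →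
      (∀ M'' : Finset (Vt × Vt), IsMatchingIn Adj M'' → M''.card ≤ M'.card) →
      (M'.filter (fun e => e.2 ∈ VP)).card ≤ (M.filter (fun e => e.2 ∈ VP)).card) :
    IsMatchingIn (fun a b => Adj a b ∧ b ∈ VP) (M.filter (fun e => e.2 ∈ VP)) ∧
    ∀ N : Finset (Vt × Vt), IsMatchingIn (fun a b => Adj a b ∧ b ∈ VP) N →
      N.card ≤ (M.filter (fun e => e.2 ∈ VP)).card :=
  stmt_16_general VP Adj M hM hmax hbest
end
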